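/- arXiv:2008.04300 — 6 statements merged into one kernel-verified Lean document; each statement's English description precedes it below -/
import Mathlib

section
/- For every odd prime p, 2·ord_p(4) = ord_{3p}(2), i.e., twice the multiplicative order of 4 modulo p equals the multiplicative order of 2 modulo 3p. -/
lemma aux_lcm (d : ℕ) (hd : 0 < d) : 2 * (d / Nat.gcd d 2) = Nat.lcm 2 d := by
  rcases Nat.even_or_odd d with ⟨k, rfl⟩ | ho
  · have hk : 0 < k := by omega
    have h2 : Nat.gcd (k + k) 2 = 2 := Nat.gcd_eq_right ⟨k, by ring⟩
    have h2' : Nat.gcd 2 (k + k) = 2 := by rw [Nat.gcd_comm]; exact h2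
    rw [Nat.lcm, h2, h2']
    omega
  · have h1 : Nat.gcd d 2 = 1 := by
      rw [Nat.gcd_comm]; exact Nat.coprime_two_left.mpr ho
    have h1' : Nat.gcd 2 d = 1 := Nat.coprime_two_left.mpr ho
    rw [Nat.lcm, h1, h1', Nat.div_one, Nat.div_one]

/-- For every odd prime `p ≥ 5`, twice the multiplicative order of `4` modulo `p`
equals the multiplicative order of `2` modulo `3 * p`. -/
theorem two_mul_orderOf_four_eq_orderOf_two_mod_three_mul
    (p : ℕ) (hp : p.Prime) (hp5 : 5 ≤ p) :
    2 * orderOf (4 : ZMod p) = orderOf (2 : ZMod (3 * p)) := by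
  haveI : Fact p.Prime := ⟨hp⟩
  have hcop : Nat.Coprime 3 p :=
    (Nat.coprime_primes (by norm_num) hp).mpr (by omega)
  have e := ZMod.chineseRemainder hcop
  have he : orderOf (2 : ZMod (3 * p)) = orderOf (e (2 : ZMod (3 * p))) :=
    (orderOf_injective e.toRingHom.toMonoidHom e.injective _).symm
  have he2 : e (2 : ZMod (3 * p)) = ((2 : ZMod 3), (2 : ZMod p)) := by
    have h : ((2 : ℕ) : ZMod (3 * p)) = (2 : ZMod (3 * p)) := by push_cast; ring
    rw [← h, map_natCast e]
    rfl
  rw [he, he2, Prod.orderOf]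
  have h3 : orderOf (2 : ZMod 3) = 2 :=
    orderOf_eq_prime (by decide) (by decide)
  rw [h3]
  have h4 : (4 : ZMod p) = (2 : ZMod p) ^ 2 := by norm_num
  rw [h4, orderOf_pow' _ (by norm_num)]
  have hunit : IsUnit (2 : ZMod p) := by
    have h : ((2 : ℕ) : ZMod p) ≠ 0 := by
      rw [Ne, ZMod.natCast_eq_zero_iff]
      intro h
      have := Nat.le_of_dvd (by norm_num) h
      omega
    have h2 : (2 : ZMod p) ≠ 0 := by exact_mod_cast h
    exact h2.isUnit
  have hpos : 0 < orderOf (2 : ZMod p) := by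
    have h := orderOf_pos hunit.unit
    rwa [← orderOf_units, hunit.unit_spec] at h
  exact aux_lcm _ hpos
end

section
/- For an odd integer b ≥ 3, let k(b) be the quasi-order of 2 modulo b, the least k ≥ 1 with 2^k ≡ ±1 mod b. Then k(b) divides φ(b)/2, i.e. φ(b)/(2·k(b)) is a positive integer. -/
/-- For odd `b ≥ 3`, the quasi-order `k(b)` (least `k ≥ 1` with `2 ^ k ≡ ±1 (mod b)`)
satisfies `2 * k(b) ∣ φ(b)`, i.e. `k(b)` divides `φ(b) / 2`. -/
theorem two_mul_quasiOrder_dvd_totient (b : ℕ) (hb : 3 ≤ b) (hodd : Odd b) (K : ℕ)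
    (hK : IsLeast {k : ℕ | 1 ≤ k ∧ ((2 : ZMod b) ^ k = 1 ∨ (2 : ZMod b) ^ k = -1)} K) :
    2 * K ∣ Nat.totient b := by
  haveI : NeZero b := ⟨by omega⟩
  haveI : Fact (2 < b) := ⟨by omega⟩
  haveI : Fact (1 < b) := ⟨by omega⟩
  have hco : Nat.Coprime 2 b := by rw [Nat.coprime_comm]; exact hodd.coprime_two_right
  set u : (ZMod b)ˣ := ZMod.unitOfCoprime 2 hco with hu
  have huval : (u : ZMod b) = 2 := by simp [hu, ZMod.coe_unitOfCoprime]
  have hpow : ∀ k : ℕ, ((u ^ k : (ZMod b)ˣ) : ZMod b) = (2 : ZMod b) ^ k := by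
    intro k; rw [Units.val_pow_eq_pow_val, huval]
  have hpow1 : ∀ k : ℕ, u ^ k = 1 ↔ (2 : ZMod b) ^ k = 1 := by
    intro k; rw [Units.ext_iff, hpow k, Units.val_one]
  have hpowneg : ∀ k : ℕ, u ^ k = -1 ↔ (2 : ZMod b) ^ k = -1 := by
    intro k; rw [Units.ext_iff, hpow k, Units.val_neg, Units.val_one]
  have hne : (-1 : ZMod b) ≠ 1 := ZMod.neg_one_ne_one
  have hK1 : 1 ≤ K := hK.1.1
  have hordpos : 0 < orderOf u := orderOf_pos u
  have hordmem : orderOf u ∈ {k : ℕ | 1 ≤ k ∧ ((2 : ZMod b) ^ k = 1 ∨ (2 : ZMod b) ^ k = -1)} :=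
    ⟨hordpos, Or.inl ((hpow1 _).mp (pow_orderOf_eq_one u))⟩
  have hKle : K ≤ orderOf u := hK.2 hordmem
  have hcard : Nat.card (ZMod b)ˣ = Nat.totient b := by
    rw [Nat.card_eq_fintype_card, ZMod.card_units_eq_totient]
  rcases hK.1.2 with h1 | hneg
  · -- 2^K = 1, so K = orderOf u and -1 is never a power of 2
    have hKord : orderOf u = K :=
      le_antisymm (Nat.le_of_dvd (by omega) (orderOf_dvd_of_pow_eq_one ((hpow1 K).mpr h1))) hKle
    have hnotmem : (-1 : (ZMod b)ˣ) ∉ Subgroup.zpowers u := by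
      intro hm
      obtain ⟨m, hm'⟩ := (Submonoid.mem_powers_iff _ _).mp (mem_powers_iff_mem_zpowers.mpr hm)
      have hmod : u ^ (m % K) = -1 := by
        have h := pow_mod_orderOf u m
        rw [hKord] at h
        rw [h, hm']
      have hm1 : 1 ≤ m % K := by
        rcases Nat.eq_zero_or_pos (m % K) with h0 | h0
        · exfalso
          rw [h0, pow_zero] at hmod
          exact hne (by simpa [Units.ext_iff] using hmod.symm)
        · exact h0
      have : u ^ (m % K) = -1 := hmod
      have hmemset : m % K ∈ {k : ℕ | 1 ≤ k ∧ ((2 : ZMod b) ^ k = 1 ∨ (2 : ZMod b) ^ k = -1)} :=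
        ⟨hm1, Or.inr ((hpowneg _).mp this)⟩
      have := hK.2 hmemset
      have hlt : m % K < K := Nat.mod_lt _ (by omega)
      omega
    -- image of -1 in quotient has order 2
    set H := Subgroup.zpowers u
    set q : (ZMod b)ˣ ⧸ H := QuotientGroup.mk (-1 : (ZMod b)ˣ) with hq
    have hq2 : q ^ 2 = 1 := by
      rw [hq, ← QuotientGroup.mk_pow]
      simp
    have hqne : q ≠ 1 := by
      rw [hq, Ne, QuotientGroup.eq_one_iff]
      exact hnotmem
    have hordq : orderOf q = 2 := orderOf_eq_prime hq2 hqne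
    have h2dvd : 2 ∣ Nat.card ((ZMod b)ˣ ⧸ H) := hordq ▸ orderOf_dvd_natCard q
    have hcardeq : Nat.totient b = Nat.card ((ZMod b)ˣ ⧸ H) * K := by
      rw [← hcard, Subgroup.card_eq_card_quotient_mul_card_subgroup H,
        Nat.card_zpowers, hKord]
    obtain ⟨c, hc⟩ := h2dvd
    exact ⟨c, by rw [hcardeq, hc]; ring⟩
  · -- 2^K = -1, so orderOf u = 2K
    have huK : u ^ K = -1 := (hpowneg K).mpr hneg
    have h2K : u ^ (2 * K) = 1 := by
      rw [two_mul, pow_add, huK]; simp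
    have hdvd : orderOf u ∣ 2 * K := orderOf_dvd_of_pow_eq_one h2K
    have hnd : ¬ orderOf u ∣ K := by
      intro h
      have : u ^ K = 1 := orderOf_dvd_iff_pow_eq_one.mp h
      rw [huK] at this
      exact hne (by simpa [Units.ext_iff] using this)
    have hord2K : orderOf u = 2 * K := by
      obtain ⟨m, hm⟩ := hdvd
      rcases Nat.lt_or_ge m 3 with h3 | h3
      · interval_cases m
        · omega
        · omega
        · exfalso; exact hnd ⟨1, by omega⟩
      · exfalso; nlinarith [hKle, hordpos]
    rw [← hord2K, ← hcard]
    exact orderOf_dvd_natCard u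
end

section
/- Let b ≥ 3 be odd, and consider the sequence q_j = |b − 2 q_{j−1}| with q_0 odd, coprime to b, 1 ≤ q_0 < b. Then the sequence is purely periodic, and its primitive period length equals k(b), the least k ≥ 1 with 2^k ≡ ±1 (mod b); in particular the period length is independent of the initial value q_0. -/
/-- For odd `b ≥ 3`, the Schick sequence `q (j+1) = |b − 2 q j|`, with `q 0` odd,
coprime to `b`, `1 ≤ q 0 < b`, is purely periodic, and its primitive period length
is the quasi-order `k(b)`, the least `k ≥ 1` with `2 ^ k ≡ ±1 (mod b)`;
in particular this length is independent of `q 0`. -/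
theorem schick_sequence_periodic (b : ℕ) (hb : 3 ≤ b) (hodd : Odd b)
    (q : ℕ → ℤ) (h0odd : Odd (q 0)) (h0cop : Int.gcd (q 0) b = 1)
    (h01 : 1 ≤ q 0) (h0lt : q 0 < b)
    (hrec : ∀ j, q (j + 1) = |(b : ℤ) - 2 * q j|)
    (K : ℕ)
    (hK : IsLeast {k : ℕ | 1 ≤ k ∧ ((2 : ZMod b) ^ k = 1 ∨ (2 : ZMod b) ^ k = -1)} K) :
    IsLeast {m : ℕ | 0 < m ∧ ∀ j, q (j + m) = q j} K := by
  have hbZ : (3:ℤ) ≤ (b:ℤ) := by exact_mod_cast hb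
  have hoddZ : Odd (b:ℤ) := by exact_mod_cast hodd
  obtain ⟨f, hf⟩ := hoddZ
  -- coprimality of 2 and b
  have h2b : IsCoprime (2:ℤ) (b:ℤ) := ⟨-f, 1, by omega⟩
  -- invariants
  have hinv : ∀ j, Odd (q j) ∧ 1 ≤ q j ∧ q j < b ∧ IsCoprime (q j) (b:ℤ) := by
    intro j
    induction j with
    | zero => exact ⟨h0odd, h01, h0lt, Int.isCoprime_iff_gcd_eq_one.mpr h0cop⟩
    | succ n ih =>
      obtain ⟨⟨m, hm⟩, h1, h2, h3⟩ := ih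
      have hodd' : Odd ((b:ℤ) - 2 * q n) := ⟨f - 2*m - 1, by omega⟩
      have hne : (b:ℤ) - 2 * q n ≠ 0 := by
        rcases hodd' with ⟨t, ht⟩; omega
      have habs : |(b:ℤ) - 2 * q n| < b := by
        rw [abs_lt]; omega
      have hcop : IsCoprime ((b:ℤ) - 2 * q n) (b:ℤ) := by
        have c1 : IsCoprime (-(2 * q n)) (b:ℤ) := (h2b.mul_left h3).neg_left
        have c2 : IsCoprime (-(2 * q n) + (b:ℤ) * 1) (b:ℤ) := c1.add_mul_left_left 1
        have e : (b:ℤ) - 2 * q n = -(2 * q n) + (b:ℤ) * 1 := by ring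
        rw [e]; exact c2
      refine ⟨?_, ?_, ?_, ?_⟩
      · rw [hrec n]; exact (odd_abs).mpr hodd'
      · rw [hrec n]; exact Int.one_le_abs (by omega)
      · rw [hrec n]; exact habs
      · rw [hrec n]
        rcases abs_choice ((b:ℤ) - 2 * q n) with h | h <;> rw [h]
        · exact hcop
        · exact hcop.neg_left
  -- sign tracking mod b
  have hsign : ∀ j m, ((q (j + m) : ZMod b) = 2 ^ m * (q j : ZMod b)) ∨
      ((q (j + m) : ZMod b) = -(2 ^ m * (q j : ZMod b))) := by
    intro j m
    induction m with
    | zero => left; simp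
    | succ n ih =>
      have heq : q (j + (n+1)) = |(b : ℤ) - 2 * q (j + n)| := by
        rw [show j + (n+1) = (j+n) + 1 from rfl, hrec (j+n)]
      rcases abs_choice ((b:ℤ) - 2 * q (j+n)) with h | h <;> rw [h] at heq <;>
        rcases ih with ih | ih
      · right; rw [heq]; push_cast; rw [ZMod.natCast_self, ih]; ring
      · left; rw [heq]; push_cast; rw [ZMod.natCast_self, ih]; ring
      · left; rw [heq]; push_cast; rw [ZMod.natCast_self, ih]; ring
      · right; rw [heq]; push_cast; rw [ZMod.natCast_self, ih]; ring
  -- injectivity of cast on [0, b)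
  have hinj : ∀ y z : ℤ, 0 ≤ y → y < b → 0 ≤ z → z < b →
      ((y : ZMod b) = (z : ZMod b)) → y = z := by
    intro y z hy1 hy2 hz1 hz2 h
    have h' := (ZMod.intCast_eq_intCast_iff _ _ _).mp h
    rwa [Int.ModEq, Int.emod_eq_of_lt hy1 hy2, Int.emod_eq_of_lt hz1 hz2] at h'
  -- membership direction
  have hmem : ∀ j m, ((2:ZMod b)^m = 1 ∨ (2:ZMod b)^m = -1) → q (j + m) = q j := by
    intro j m h2
    obtain ⟨ho, h1, hlt, hcop⟩ := hinv j
    obtain ⟨ho', h1', hlt', _⟩ := hinv (j + m)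
    have hcast : (q (j+m) : ZMod b) = (q j : ZMod b) ∨
        (q (j+m) : ZMod b) = -(q j : ZMod b) := by
      rcases hsign j m with h | h <;> rcases h2 with h2 | h2 <;> rw [h, h2]
      · left; ring
      · right; ring
      · right; ring
      · left; ring
    rcases hcast with h | h
    · exact hinj _ _ (by omega) hlt' (by omega) hlt h
    · exfalso
      have hmod : (q (j+m) : ZMod b) = ((- q j : ℤ) : ZMod b) := by push_cast; exact h
      have hme := (ZMod.intCast_eq_intCast_iff _ _ _).mp hmod
      have hdvd0 : (b:ℤ) ∣ (- q j - q (j+m)) := Int.ModEq.dvd hme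
      have hdvd : (b:ℤ) ∣ (q (j+m) + q j) := by
        have := (dvd_neg).mpr hdvd0
        simpa using this
      have hsle : (b:ℤ) ≤ q (j+m) + q j := Int.le_of_dvd (by omega) hdvd
      have hdvd2 : (b:ℤ) ∣ (q (j+m) + q j - b) := dvd_sub hdvd (dvd_refl _)
      have hzero : q (j+m) + q j - b = 0 := by
        refine Int.eq_zero_of_abs_lt_dvd hdvd2 ?_
        rw [abs_lt]; omega
      have hevens : Even (q (j+m) + q j) := ho'.add_odd ho
      rcases hevens with ⟨e, he⟩
      omega
  constructor
  · exact ⟨hK.1.1, fun j => hmem j K hK.1.2⟩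
  · intro m hm
    obtain ⟨hm0, hmp⟩ := hm
    have hqm : q (0 + m) = q 0 := hmp 0
    obtain ⟨u, v, huv⟩ := (hinv 0).2.2.2
    have hw : (u : ZMod b) * (q 0 : ZMod b) = 1 := by
      have : ((u * q 0 + v * b : ℤ) : ZMod b) = ((1:ℤ) : ZMod b) := by rw [huv]
      push_cast at this
      rw [ZMod.natCast_self] at this
      simpa using this
    have h2m : (2:ZMod b)^m = 1 ∨ (2:ZMod b)^m = -1 := by
      rcases hsign 0 m with h | h <;> rw [hqm] at h
      · left; linear_combination -((u:ZMod b)*h) - ((2:ZMod b)^m - 1)*hw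
      · right; linear_combination (u:ZMod b)*h - ((2:ZMod b)^m + 1)*hw
    exact hK.2 ⟨by omega, h2m⟩
end

section
/- Let b ≥ 3 be odd and a coprime to b with 1 ≤ a ≤ (b−1)/2. Define c_j = mod*(a·2^j, b) for j ≥ 1 (the modified modular doubling sequence). Then the sequence (c_j) is purely periodic with primitive period length k(b), the least k ≥ 1 with 2^k ≡ ±1 (mod b), and this length is independent of a. -/
/-- The modified residue `mod*(a, b)`: `a mod b` if `a mod b ≤ b/2`, else `b − (a mod b)`. -/
def modStar (b : ℕ) (a : ℤ) : ℤ :=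
  if a % (b : ℤ) ≤ (b : ℤ) / 2 then a % (b : ℤ) else (b : ℤ) - a % (b : ℤ)

/-!
`mod*(x, b)` is the smaller of the residues of `x` and `-x`, so `mod*(x, b) = mod*(y, b)` exactly
when `x ≡ ±y (mod b)`. Since `a · 2^j` is a unit mod `b`, shifting the sequence by `m` leaves the
term `c_j` unchanged iff `2^m ≡ ±1 (mod b)`, for every `j` alike; so the periods are exactly
the `m ≥ 1` with `2^m ≡ ±1`, and the least of them is `k(b)`.
-/

theorem modStar_eq_min (b : ℕ) (x : ℤ) : modStar b x = min (x % b) ((-x) % b) := by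
  rcases Nat.eq_zero_or_pos b with rfl | hb
  · simp only [modStar, Nat.cast_zero, Int.emod_zero]
    split_ifs <;> omega
  have := Int.emod_nonneg x (b := b) (by omega)
  have := Int.emod_lt_of_pos x (b := b) (by omega)
  simp only [modStar, Int.neg_emod, Int.natAbs_natCast, Int.dvd_iff_emod_eq_zero]
  split_ifs <;> omega

theorem modStar_neg (b : ℕ) (x : ℤ) : modStar b (-x) = modStar b x := by
  rw [modStar_eq_min, modStar_eq_min, neg_neg, min_comm]

theorem modStar_eq_of_intCast_eq {b : ℕ} {x y : ℤ} (h : (x : ZMod b) = y) :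
    modStar b x = modStar b y := by
  unfold modStar
  rw [(ZMod.intCast_eq_intCast_iff' x y b).mp h]

theorem modStar_eq_modStar_iff (b : ℕ) (x y : ℤ) :
    modStar b x = modStar b y ↔ (x : ZMod b) = y ∨ (x : ZMod b) = -y := by
  constructor
  · intro h
    simp only [modStar_eq_min] at h
    -- `min` returns one of its arguments: some residue of `±x` equals some residue of `±y`.
    rcases min_choice (x % (b : ℤ)) ((-x) % b) with hx | hx <;>
      rcases min_choice (y % (b : ℤ)) ((-y) % b) with hy | hy <;>
      rw [hx, hy, ← ZMod.intCast_eq_intCast_iff'] at h <;>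
      push_cast [neg_eq_iff_eq_neg, neg_neg] at h
    all_goals first | exact Or.inl h | exact Or.inr h
  · rintro (h | h)
    · exact modStar_eq_of_intCast_eq h
    · rw [modStar_eq_of_intCast_eq (y := -y) (by rw [h, Int.cast_neg]), modStar_neg]

theorem modStar_mul_pow_add_eq_iff {b : ℕ} {a g : ℤ} (ha : IsUnit (a : ZMod b))
    (hg : IsUnit (g : ZMod b)) (j m : ℕ) :
    modStar b (a * g ^ (j + m)) = modStar b (a * g ^ j) ↔
      (g : ZMod b) ^ m = 1 ∨ (g : ZMod b) ^ m = -1 := by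
  have hu : IsUnit ((a : ZMod b) * g ^ j) := ha.mul (hg.pow j)
  rw [modStar_eq_modStar_iff]
  push_cast
  rw [pow_add, ← mul_assoc]
  conv_lhs => rw [← mul_neg_one ((a : ZMod b) * g ^ j)]
  nth_rw 2 [← mul_one ((a : ZMod b) * g ^ j)]
  rw [hu.mul_right_inj, hu.mul_right_inj]

theorem mds_periodic_general (b : ℕ) (hodd : Odd b)
    (a : ℤ) (ha : Int.gcd a b = 1)
    (K : ℕ)
    (hK : IsLeast {k : ℕ | 1 ≤ k ∧ ((2 : ZMod b) ^ k = 1 ∨ (2 : ZMod b) ^ k = -1)} K) :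
    IsLeast {m : ℕ | 0 < m ∧ ∀ j : ℕ, 1 ≤ j →
      modStar b (a * 2 ^ (j + m)) = modStar b (a * 2 ^ j)} K := by
  have hunit_a : IsUnit (a : ZMod b) :=
    (ZMod.unitOfIsCoprime a (Int.isCoprime_iff_gcd_eq_one.mpr ha)).isUnit
  have hunit_two : IsUnit ((2 : ℤ) : ZMod b) := by
    exact_mod_cast (ZMod.isUnit_iff_coprime 2 b).mpr (Nat.coprime_two_left.mpr hodd)
  convert hK using 3 with m
  simp only [modStar_mul_pow_add_eq_iff hunit_a hunit_two, Int.cast_ofNat]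
  exact and_congr Iff.rfl ⟨fun h ↦ h 1 le_rfl, fun h _ _ ↦ h⟩

/-- For odd `b ≥ 3` and `a` coprime to `b` with `1 ≤ a ≤ (b−1)/2`, the modified
modular doubling sequence `c j = mod*(a·2^j, b)` (for `j ≥ 1`) is purely periodic
with primitive period length the quasi-order `k(b)` (least `k ≥ 1` with
`2 ^ k ≡ ±1 (mod b)`), independently of `a`. -/
theorem mds_periodic (b : ℕ) (hb : 3 ≤ b) (hodd : Odd b)
    (a : ℤ) (ha : Int.gcd a b = 1) (ha1 : 1 ≤ a) (ha2 : a ≤ ((b : ℤ) - 1) / 2)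
    (K : ℕ)
    (hK : IsLeast {k : ℕ | 1 ≤ k ∧ ((2 : ZMod b) ^ k = 1 ∨ (2 : ZMod b) ^ k = -1)} K) :
    IsLeast {m : ℕ | 0 < m ∧ ∀ j : ℕ, 1 ≤ j →
      modStar b (a * 2 ^ (j + m)) = modStar b (a * 2 ^ j)} K :=
  mds_periodic_general b hodd a ha K hK
end

section
/- Let b ≥ 3 be odd and c_j = mod*(a·2^j, b) with a coprime to b, 1 ≤ a ≤ (b−1)/2. Then for all j ≥ 2, c_j = (b − |b − 4·c_{j−1}|)/2. -/
lemma modStar_double (b : ℕ) (hb : 3 ≤ b) (hodd : Odd b) (x : ℤ) :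
    modStar b (2 * x) = ((b : ℤ) - |(b : ℤ) - 4 * modStar b x|) / 2 := by
  obtain ⟨k, hk⟩ := hodd
  have hbZ : (3 : ℤ) ≤ (b : ℤ) := by exact_mod_cast hb
  set r := x % (b : ℤ) with hr
  have hr0 : 0 ≤ r := Int.emod_nonneg x (by omega)
  have hrb : r < (b : ℤ) := Int.emod_lt_of_pos x (by omega)
  have h2 : (2 * x) % (b : ℤ) = (2 * r) % (b : ℤ) := by
    rw [Int.mul_emod, Int.mul_emod 2 r]
    rw [Int.emod_emod_of_dvd _ dvd_rfl]
  have h2r : (2 * r) % (b : ℤ) = if 2 * r < (b : ℤ) then 2 * r else 2 * r - b := by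
    split_ifs with h
    · exact Int.emod_eq_of_lt (by omega) h
    · have heq : (2 * r - b) % (b : ℤ) = (2 * r) % (b : ℤ) := by
        simp [Int.sub_emod]
      rw [← heq]
      exact Int.emod_eq_of_lt (by omega) (by omega)
  have hkZ : (b : ℤ) = 2 * (k : ℤ) + 1 := by exact_mod_cast hk
  unfold modStar
  rw [h2, h2r, ← hr]
  rcases abs_cases ((b : ℤ) - 4 * (if r ≤ (b : ℤ) / 2 then r else (b : ℤ) - r)) with ⟨he, _⟩ | ⟨he, _⟩ <;>
    rw [he] <;> split_ifs <;> omega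

/-- For odd `b ≥ 3` and `a` coprime to `b` with `1 ≤ a ≤ (b−1)/2`, the modified
modular doubling sequence `c j = mod*(a·2^j, b)` satisfies, for all `j ≥ 2`,
the one-line recurrence `c j = (b − |b − 4·c (j−1)|) / 2`. -/
theorem mds_one_line_recurrence (b : ℕ) (hb : 3 ≤ b) (hodd : Odd b)
    (a : ℤ) (ha : Int.gcd a b = 1) (ha1 : 1 ≤ a) (ha2 : a ≤ ((b : ℤ) - 1) / 2) :
    ∀ j : ℕ, 2 ≤ j →
      modStar b (a * 2 ^ j) = ((b : ℤ) - |(b : ℤ) - 4 * modStar b (a * 2 ^ (j - 1))|) / 2 := by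
  intro j hj
  obtain ⟨i, rfl⟩ : ∃ i, j = i + 1 := ⟨j - 1, by omega⟩
  have h : a * 2 ^ (i + 1) = 2 * (a * 2 ^ (i + 1 - 1)) := by
    simp [pow_succ]; ring
  rw [h]
  exact modStar_double b hb hodd _
end

section
/- Let b ≥ 3 be odd and let (q_j) be the Schick cycle: q_0 odd, coprime to b, 1 ≤ q_0 ≤ (b−1)/2, q_j = |b − 2 q_{j−1}|, with primitive period length P = k(b) (indices cyclic). Then c_j := (b − q_{j+1})/2, for j = 1, …, P, satisfies c_j = mod*(q_0·2^j, b); i.e., the Schick cycle determines the modified modular doubling cycle. -/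
private lemma schick_range (b : ℕ) (hb : 3 ≤ b) (hodd : Odd b) (q : ℕ → ℤ)
    (h0odd : Odd (q 0)) (h01 : 1 ≤ q 0) (h02 : q 0 ≤ ((b : ℤ) - 1) / 2)
    (hrec : ∀ j, q (j + 1) = |(b : ℤ) - 2 * q j|) :
    ∀ j, Odd (q j) ∧ 1 ≤ q j ∧ q j ≤ (b : ℤ) - 2 := by
  obtain ⟨m0, hm0⟩ := hodd
  have hbz : (b : ℤ) = 2 * m0 + 1 := by exact_mod_cast hm0
  intro j
  induction j with
  | zero =>
    refine ⟨h0odd, h01, ?_⟩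
    omega
  | succ j ih =>
    obtain ⟨hojd, h1, h2⟩ := ih
    obtain ⟨t, ht⟩ := hojd
    have hnn : 0 ≤ q (j + 1) := by rw [hrec j]; exact abs_nonneg _
    have habs := hrec j
    rcases abs_choice ((b : ℤ) - 2 * q j) with hch | hch <;> rw [hch] at habs
    · refine ⟨⟨m0 - q j, by omega⟩, by omega, by omega⟩
    · refine ⟨⟨q j - m0 - 1, by omega⟩, by omega, by omega⟩

private lemma schick_cong (b : ℕ) (q : ℕ → ℤ)
    (hrec : ∀ j, q (j + 1) = |(b : ℤ) - 2 * q j|) :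
    ∀ j, ∃ ε : ℤ, (ε = 1 ∨ ε = -1) ∧ (b : ℤ) ∣ q j - ε * (2 ^ j * q 0) := by
  intro j
  induction j with
  | zero => exact ⟨1, Or.inl rfl, by simp⟩
  | succ j ih =>
    obtain ⟨ε, hε, k, hk⟩ := ih
    have habs := hrec j
    rcases abs_choice ((b : ℤ) - 2 * q j) with hch | hch <;> rw [hch] at habs
    · refine ⟨-ε, by rcases hε with rfl | rfl <;> simp, ⟨1 - 2 * k, ?_⟩⟩
      have hqe : q j - ε * (2 ^ j * q 0) = b * k := hk
      linear_combination habs - 2 * hqe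
    · refine ⟨ε, hε, ⟨2 * k - 1, ?_⟩⟩
      have hqe : q j - ε * (2 ^ j * q 0) = b * k := hk
      linear_combination habs + 2 * hqe

private lemma small_eq (b c m : ℤ) (hb : 0 < b) (hlt : c - m < b) (hgt : m - c < b)
    (h : b ∣ c - m) : c = m := by
  obtain ⟨k, hk⟩ := h
  have h1 : k < 1 := by nlinarith
  have h2 : -1 < k := by nlinarith
  have hk0 : k = 0 := by omega
  rw [hk0] at hk; omega

private lemma key_eq (b c m x ε δ : ℤ) (hb : 3 ≤ b) (hc1 : 1 ≤ c) (hc2 : 2 * c ≤ b - 1)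
    (hm0 : 0 ≤ m) (hm2 : 2 * m ≤ b - 1)
    (hε : ε = 1 ∨ ε = -1) (hδ : δ = 1 ∨ δ = -1)
    (h1 : b ∣ c + ε * x) (h2 : b ∣ m + δ * x) : c = m := by
  rcases hε with rfl | rfl <;> rcases hδ with rfl | rfl
  · -- same sign: b ∣ c - m
    have h3 : b ∣ c - m := by
      have := h1.sub h2
      have he : c + 1 * x - (m + 1 * x) = c - m := by ring
      rwa [he] at this
    exact small_eq b c m (by omega) (by omega) (by omega) h3
  · -- opposite signs: b ∣ c + m, contradiction
    have h3 : b ∣ c + m := by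
      have := h1.add h2
      have he : c + 1 * x + (m + -1 * x) = c + m := by ring
      rwa [he] at this
    have := Int.le_of_dvd (by omega) h3
    omega
  · have h3 : b ∣ c + m := by
      have := h1.add h2
      have he : c + -1 * x + (m + 1 * x) = c + m := by ring
      rwa [he] at this
    have := Int.le_of_dvd (by omega) h3
    omega
  · have h3 : b ∣ c - m := by
      have := h1.sub h2
      have he : c + -1 * x - (m + -1 * x) = c - m := by ring
      rwa [he] at this
    exact small_eq b c m (by omega) (by omega) (by omega) h3

/-- For odd `b ≥ 3`, let `q` be a Schick cycle: `q 0` odd, coprime to `b`,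
`1 ≤ q 0 ≤ (b−1)/2`, `q (j+1) = |b − 2·q j|`, with primitive period length
`P = k(b)` (least `k ≥ 1` with `2 ^ k ≡ ±1 (mod b)`).  Then for `1 ≤ j ≤ P`,
`(b − q (j+1)) / 2 = mod*(q 0 · 2^j, b)`: the Schick cycle determines the
modified modular doubling cycle. -/
theorem mds_from_schick (b : ℕ) (hb : 3 ≤ b) (hodd : Odd b)
    (q : ℕ → ℤ) (h0odd : Odd (q 0)) (h0cop : Int.gcd (q 0) b = 1)
    (h01 : 1 ≤ q 0) (h02 : q 0 ≤ ((b : ℤ) - 1) / 2)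
    (hrec : ∀ j, q (j + 1) = |(b : ℤ) - 2 * q j|)
    (P : ℕ)
    (hP : IsLeast {k : ℕ | 1 ≤ k ∧ ((2 : ZMod b) ^ k = 1 ∨ (2 : ZMod b) ^ k = -1)} P) :
    ∀ j : ℕ, 1 ≤ j → j ≤ P → ((b : ℤ) - q (j + 1)) / 2 = modStar b (q 0 * 2 ^ j) := by
  obtain ⟨m0, hm0⟩ := hodd
  have hbz : (b : ℤ) = 2 * m0 + 1 := by exact_mod_cast hm0
  have hbpos : (0 : ℤ) < b := by omega
  intro j _ _
  -- facts about q (j+1)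
  obtain ⟨⟨t, ht⟩, h1, h2⟩ := schick_range b hb ⟨m0, hm0⟩ q h0odd h01 h02 hrec (j + 1)
  obtain ⟨ε, hε, k, hk⟩ := schick_cong b q hrec (j + 1)
  set x : ℤ := q 0 * 2 ^ j with hx
  set c : ℤ := ((b : ℤ) - q (j + 1)) / 2 with hc
  have h2c : 2 * c = (b : ℤ) - q (j + 1) := by rw [hc]; omega
  -- b ∣ c + ε * x
  have hdc2 : (b : ℤ) ∣ (c + ε * x) * 2 := by
    refine ⟨1 - k, ?_⟩
    have hqe : q (j + 1) - ε * (2 ^ (j + 1) * q 0) = b * k := hk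
    linear_combination h2c - hqe
  have hcop : IsCoprime ((b : ℤ)) 2 := ⟨1, -(m0 : ℤ), by rw [hbz]; ring⟩
  have hdc : (b : ℤ) ∣ c + ε * x := hcop.dvd_of_dvd_mul_right hdc2
  -- bounds on c
  have hc1 : 1 ≤ c := by omega
  have hc2 : 2 * c ≤ (b : ℤ) - 1 := by omega
  -- residue facts
  have hr0 : 0 ≤ x % (b : ℤ) := Int.emod_nonneg _ (by omega)
  have hrlt : x % (b : ℤ) < b := Int.emod_lt_of_pos _ hbpos
  have hxr : (b : ℤ) ∣ x - x % (b : ℤ) := ⟨x / b, by rw [Int.emod_def]; ring⟩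
  unfold modStar
  split_ifs with h
  · -- m = x % b, m ≡ x, so δ = -1
    refine key_eq b c (x % b) x ε (-1) (by omega) hc1 hc2 hr0 (by omega) hε (Or.inr rfl)
      hdc ?_
    obtain ⟨u, hu⟩ := hxr
    exact ⟨-u, by linarith [hu]⟩
  · -- m = b - x % b, m ≡ -x, so δ = 1
    refine key_eq b c ((b : ℤ) - x % b) x ε 1 (by omega) hc1 hc2 (by omega) (by omega) hε
      (Or.inl rfl) hdc ?_
    obtain ⟨u, hu⟩ := hxr
    exact ⟨1 + u, by linarith [hu]⟩
end
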